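/- arXiv:2103.08077 — 3 statements merged into one kernel-verified Lean document; each statement's English description precedes it below -/
import Mathlib

section
/- Under the hypotheses of the locally uniform divergence bound (partition $\mathcal{A}$, pmf $Q$ locally uniform with weights $\underline{\beta}$, all $\beta_j>0$ and all $P(A_j)>0$), equality $D(P\|Q) = D(P(\mathcal{A})\|\underline{\beta}) + \sum_j P(A_j)\log|A_j|$ holds if and only if $P$ is a $k$-point mass, i.e., for each $j$ there exists $x_j' \in A_j$ with $P(x_j') = P(A_j)$. -/
open Finset

/-- Kullback–Leibler divergence (base 2) between two pmfs on a finite type. -/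
noncomputable def kl {α : Type*} [Fintype α] (P Q : α → ℝ) : ℝ :=
  ∑ x, P x * Real.logb 2 (P x / Q x)

theorem locally_uniform_divergence_equality_iff {X : Type*} [Fintype X] {k : ℕ} (hk : 2 ≤ k)
    (A : Fin k → Finset X)
    (hdisj : ∀ i j, i ≠ j → Disjoint (A i) (A j))
    (hne : ∀ j, (A j).Nonempty)
    (hcover : ∀ x : X, ∃ j, x ∈ A j)
    (P : X → ℝ) (hP0 : ∀ x, 0 ≤ P x) (hP1 : ∑ x, P x = 1)
    (β : Fin k → ℝ) (hβpos : ∀ j, 0 < β j) (hβ1 : ∑ j, β j = 1)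
    (hPApos : ∀ j, 0 < ∑ x ∈ A j, P x)
    (Q : X → ℝ)
    (hQ : ∀ j, ∀ x ∈ A j, Q x = β j / (A j).card) :
    kl P Q = kl (fun j => ∑ x ∈ A j, P x) β
        + ∑ j, (∑ x ∈ A j, P x) * Real.logb 2 ((A j).card)
      ↔ ∀ j, ∃ x ∈ A j, P x = ∑ x' ∈ A j, P x' := by
  classical
  set PA : Fin k → ℝ := fun j => ∑ x ∈ A j, P x with hPA
  have hPAj : ∀ j, 0 < PA j := hPApos
  -- partition of the sum over X
  have hU : (univ : Finset X) = Finset.univ.biUnion A := by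
    ext x
    simp only [mem_univ, mem_biUnion, true_iff, true_and, exists_prop]
    exact hcover x
  have hpart : ∀ f : X → ℝ, ∑ x, f x = ∑ j, ∑ x ∈ A j, f x := by
    intro f
    rw [show (univ : Finset X) = Finset.univ.biUnion A from hU, Finset.sum_biUnion]
    intro i _ j _ hij
    exact hdisj i j hij
  -- per-block split
  have hsplit : ∀ j, ∑ x ∈ A j, P x * Real.logb 2 (P x / Q x)
      = (∑ x ∈ A j, P x * Real.logb 2 (P x / PA j))
        + (PA j * Real.logb 2 (PA j / β j) + PA j * Real.logb 2 ((A j).card)) := by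
    intro j
    have hcard : (0:ℝ) < (A j).card := by
      exact_mod_cast Finset.card_pos.mpr (hne j)
    have e1 : PA j * Real.logb 2 (PA j / β j)
        = ∑ x ∈ A j, P x * Real.logb 2 (PA j / β j) := by
      rw [hPA]; exact Finset.sum_mul ..
    have e2 : PA j * Real.logb 2 ((A j).card)
        = ∑ x ∈ A j, P x * Real.logb 2 ((A j).card) := by
      rw [hPA]; exact Finset.sum_mul ..
    rw [e1, e2, ← Finset.sum_add_distrib, ← Finset.sum_add_distrib]
    apply Finset.sum_congr rfl
    intro x hx
    rcases eq_or_lt_of_le (hP0 x) with h0 | hpos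
    · simp [← h0]
    · have hQx : Q x = β j / (A j).card := hQ j x hx
      have h1 : P x / Q x = (P x / PA j) * ((PA j / β j) * ((A j).card : ℝ)) := by
        rw [hQx]
        field_simp [ne_of_gt (hPAj j), ne_of_gt hcard, ne_of_gt (hβpos j)]
      rw [h1, Real.logb_mul, Real.logb_mul]
      · ring
      · exact ne_of_gt (div_pos (hPAj j) (hβpos j))
      · exact ne_of_gt hcard
      · exact ne_of_gt (div_pos hpos (hPAj j))
      · exact ne_of_gt (mul_pos (div_pos (hPAj j) (hβpos j)) hcard)
  have hklP : kl P Q = (∑ j, ∑ x ∈ A j, P x * Real.logb 2 (P x / PA j))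
      + (kl PA β + ∑ j, PA j * Real.logb 2 ((A j).card)) := by
    unfold kl
    rw [hpart (fun x => P x * Real.logb 2 (P x / Q x)),
      Finset.sum_congr rfl (fun j _ => hsplit j),
      Finset.sum_add_distrib, Finset.sum_add_distrib]
  have key : (kl P Q = kl PA β + ∑ j, PA j * Real.logb 2 ((A j).card))
      ↔ (∑ j, ∑ x ∈ A j, P x * Real.logb 2 (P x / PA j)) = 0 := by
    rw [hklP]
    constructor <;> intro h <;> linarith
  have hterm_nonpos : ∀ j, ∀ x ∈ A j, P x * Real.logb 2 (P x / PA j) ≤ 0 := by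
    intro j x hx
    have hle : P x ≤ PA j := Finset.single_le_sum (fun i _ => hP0 i) hx
    have hlog : Real.logb 2 (P x / PA j) ≤ 0 :=
      Real.logb_nonpos one_lt_two (div_nonneg (hP0 x) (le_of_lt (hPAj j)))
        ((div_le_one (hPAj j)).mpr hle)
    exact mul_nonpos_iff.mpr (Or.inl ⟨hP0 x, hlog⟩)
  have hzero : ∀ j, ∀ x ∈ A j, P x * Real.logb 2 (P x / PA j) = 0 →
      P x = 0 ∨ P x = PA j := by
    intro j x hx h
    rcases mul_eq_zero.mp h with h0 | hlog
    · exact Or.inl h0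
    · rcases Real.logb_eq_zero.mp hlog with hb | hb | hb | hb | hb | hb
      · norm_num at hb
      · norm_num at hb
      · norm_num at hb
      · left
        rcases div_eq_zero_iff.mp hb with h' | h'
        · exact h'
        · exact absurd h' (ne_of_gt (hPAj j))
      · right
        have := (div_eq_one_iff_eq (ne_of_gt (hPAj j))).mp hb
        exact this
      · exfalso
        have : 0 ≤ P x / PA j := div_nonneg (hP0 x) (le_of_lt (hPAj j))
        linarith [hb ▸ this]
  have hTj : ∀ j, (∑ x ∈ A j, P x * Real.logb 2 (P x / PA j)) = 0 ↔
      ∃ x ∈ A j, P x = PA j := by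
    intro j
    rw [Finset.sum_eq_zero_iff_of_nonpos (fun x hx => hterm_nonpos j x hx)]
    constructor
    · intro h
      by_contra hcon
      push_neg at hcon
      have hall : ∀ x ∈ A j, P x = 0 := by
        intro x hx
        rcases hzero j x hx (h x hx) with h0 | hPAeq
        · exact h0
        · exact absurd hPAeq (hcon x hx)
      have : PA j = 0 := by rw [hPA]; exact Finset.sum_eq_zero hall
      linarith [hPAj j]
    · rintro ⟨x0, hx0, hPx0⟩ x hx
      by_cases hxx : x = x0
      · subst hxx
        rw [hPx0, div_self (ne_of_gt (hPAj j)), Real.logb_one, mul_zero]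
      · have hPx : P x = 0 := by
          have hsub : ({x, x0} : Finset X) ⊆ A j := by
            intro y hy
            rcases Finset.mem_insert.mp hy with h' | h'
            · exact h' ▸ hx
            · exact (Finset.mem_singleton.mp h') ▸ hx0
          have hle : ∑ y ∈ ({x, x0} : Finset X), P y ≤ PA j := by
            rw [hPA]
            exact Finset.sum_le_sum_of_subset_of_nonneg hsub (fun y _ _ => hP0 y)
          rw [Finset.sum_pair hxx] at hle
          have := hP0 x
          linarith
        simp [hPx]
  rw [key, Finset.sum_eq_zero_iff_of_nonpos
    (fun j _ => Finset.sum_nonpos (hterm_nonpos j))]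
  constructor
  · intro h j
    exact (hTj j).mp (h j (mem_univ j))
  · intro h j _
    exact (hTj j).mpr (h j)
end

section
/- Let $P$, $Q$, $Q_o$ be probability mass functions on a finite set $\mathcal{X}$ with $\mathrm{supp}(P) \subseteq \mathrm{supp}(Q) \subseteq \mathrm{supp}(Q_o)$. Then $D(P\|Q) \ge D(P\|Q_o) - \mathrm{var}(Q,Q_o)/Q_o^{\min}$, where $\mathrm{var}(Q,Q_o) = \sum_{x}|Q(x)-Q_o(x)|$ is the variational ($\ell_1$) distance and $Q_o^{\min}$ is the smallest nonzero value of $Q_o$. -/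
open Finset

theorem divergence_variational_lower_bound {X : Type*} [Fintype X]
    (P Q Qo : X → ℝ)
    (hP0 : ∀ x, 0 ≤ P x) (hP1 : ∑ x, P x = 1)
    (hQ0 : ∀ x, 0 ≤ Q x) (hQ1 : ∑ x, Q x = 1)
    (hQo0 : ∀ x, 0 ≤ Qo x) (hQo1 : ∑ x, Qo x = 1)
    (hsuppPQ : ∀ x, 0 < P x → 0 < Q x)
    (hsuppQQo : ∀ x, 0 < Q x → 0 < Qo x)
    (Qomin : ℝ)
    (hQomin : IsLeast {v : ℝ | 0 < v ∧ ∃ x, Qo x = v} Qomin) :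
    kl P Qo - (∑ x, |Q x - Qo x|) / Qomin ≤ kl P Q := by
  obtain ⟨⟨hQomin_pos, -⟩, hmin⟩ := hQomin
  have hlog2 : (0:ℝ) < Real.log 2 := Real.log_pos one_lt_two
  have hlog2' : (0.6931471803 : ℝ) < Real.log 2 := Real.log_two_gt_d9
  have key : ∀ x, P x * Real.logb 2 (P x / Qo x) - P x * Real.logb 2 (P x / Q x)
      ≤ max (Q x - Qo x) 0 / (Qomin * Real.log 2) := by
    intro x
    rcases eq_or_lt_of_le (hP0 x) with h0 | hPx
    · rw [← h0]
      simp only [zero_mul, sub_zero]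
      positivity
    · have hQx := hsuppPQ x hPx
      have hQox := hsuppQQo x hQx
      have hQominle : Qomin ≤ Qo x := hmin ⟨hQox, x, rfl⟩
      have hPle1 : P x ≤ 1 := by
        rw [← hP1]
        exact Finset.single_le_sum (fun i _ => hP0 i) (Finset.mem_univ x)
      have hlogb : Real.logb 2 (P x / Qo x) - Real.logb 2 (P x / Q x)
          = Real.log (Q x / Qo x) / Real.log 2 := by
        rw [Real.logb, Real.logb, div_sub_div_same,
          Real.log_div hPx.ne' hQox.ne', Real.log_div hPx.ne' hQx.ne',
          Real.log_div hQx.ne' hQox.ne']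
        ring_nf
      rw [← mul_sub, hlogb]
      have hlb : Real.log (Q x / Qo x) ≤ (Q x - Qo x) / Qo x := by
        have := Real.log_le_sub_one_of_pos (div_pos hQx hQox)
        have : Q x / Qo x - 1 = (Q x - Qo x) / Qo x := by field_simp
        linarith [Real.log_le_sub_one_of_pos (div_pos hQx hQox), this]
      have step1 : P x * (Real.log (Q x / Qo x) / Real.log 2)
          ≤ P x * ((Q x - Qo x) / Qo x / Real.log 2) := by
        gcongr
      have step2 : P x * ((Q x - Qo x) / Qo x / Real.log 2)
          ≤ max (Q x - Qo x) 0 / (Qomin * Real.log 2) := by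
        rcases le_total (Q x - Qo x) 0 with hd | hd
        · have h1 : P x * ((Q x - Qo x) / Qo x / Real.log 2) ≤ 0 := by
            apply mul_nonpos_of_nonneg_of_nonpos (hP0 x)
            apply div_nonpos_of_nonpos_of_nonneg _ hlog2.le
            exact div_nonpos_of_nonpos_of_nonneg hd hQox.le
          have h2 : max (Q x - Qo x) 0 = 0 := max_eq_right hd
          rw [h2]; simpa using h1
        · have h2 : max (Q x - Qo x) 0 = Q x - Qo x := max_eq_left hd
          rw [h2]
          have : P x * ((Q x - Qo x) / Qo x / Real.log 2)
              = P x * (Q x - Qo x) / (Qo x * Real.log 2) := by ring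
          rw [this]
          gcongr
          nlinarith
      linarith
  have hsum : kl P Qo - kl P Q ≤ ∑ x, max (Q x - Qo x) 0 / (Qomin * Real.log 2) := by
    unfold kl
    rw [← Finset.sum_sub_distrib]
    exact Finset.sum_le_sum fun x _ => key x
  have hmaxsum : ∑ x, max (Q x - Qo x) 0 = (∑ x, |Q x - Qo x|) / 2 := by
    have hpt : ∀ a : ℝ, max a 0 = (|a| + a) / 2 := by
      intro a
      rcases le_total a 0 with h | h
      · rw [max_eq_right h, abs_of_nonpos h]; ring
      · rw [max_eq_left h, abs_of_nonneg h]; ring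
    simp_rw [hpt]
    rw [← Finset.sum_div, Finset.sum_add_distrib, Finset.sum_sub_distrib, hQ1, hQo1]
    ring
  have hvar0 : 0 ≤ ∑ x, |Q x - Qo x| := Finset.sum_nonneg fun x _ => abs_nonneg _
  have hfin : (∑ x, |Q x - Qo x|) / 2 / (Qomin * Real.log 2)
      ≤ (∑ x, |Q x - Qo x|) / Qomin := by
    rw [div_div]
    gcongr
    nlinarith
  have := Finset.sum_div Finset.univ (fun x => max (Q x - Qo x) 0) (Qomin * Real.log 2)
  rw [← this, hmaxsum] at hsum
  linarith
end

section
/- Let $f:\mathcal{X}\to\mathcal{Z}$ be surjective with finite $\mathcal{X},\mathcal{Z}$, $|\mathcal{Z}|=k\ge 2$. If a stochastic matrix $W:\mathcal{X}\to\mathcal{Z}$ satisfies both $\rho$-recoverability $W(f(x)|x)\ge\rho$ for all $x\in\mathcal{X}$ and $\epsilon$-local differential privacy $W(j|x') \le e^{\epsilon} W(j|x)$ for all $x,x'\in\mathcal{X}$ and $j\in\mathcal{Z}$, then necessarily $\rho \le 1/(1+(k-1)e^{-\epsilon}) < 1$. -/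
open Finset

theorem ldp_recoverability_constraint {X Z : Type*} [Fintype X] [Fintype Z]
    (f : X → Z) (hf : Function.Surjective f)
    (hk : 2 ≤ Fintype.card Z)
    (ρ ε : ℝ) (hρ0 : 0 ≤ ρ) (hρ1 : ρ ≤ 1) (hε : 0 < ε)
    (W : X → Z → ℝ)
    (hW0 : ∀ x j, 0 ≤ W x j) (hW1 : ∀ x, ∑ j, W x j = 1)
    (hrec : ∀ x, ρ ≤ W x (f x))
    (hldp : ∀ x x' j, W x' j ≤ Real.exp ε * W x j) :
    ρ ≤ 1 / (1 + (Fintype.card Z - 1) * Real.exp (-ε)) ∧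
      1 / (1 + (Fintype.card Z - 1) * Real.exp (-ε)) < 1 := by
  classical
  set k : ℝ := (Fintype.card Z : ℝ)
  have hk1 : (1:ℝ) ≤ k - 1 := by
    have : (2:ℝ) ≤ k := by simp only [k]; exact_mod_cast hk
    linarith
  have hexp : 0 < Real.exp (-ε) := Real.exp_pos _
  have hD : 1 < 1 + (k - 1) * Real.exp (-ε) := by nlinarith
  have hD0 : 0 < 1 + (k - 1) * Real.exp (-ε) := by linarith
  constructor
  · -- pick some x
    have hZne : Nonempty Z := Fintype.card_pos_iff.mp (by omega)
    obtain ⟨z0⟩ := hZne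
    obtain ⟨x0, hx0⟩ := hf z0
    -- lower bound each W x0 j for j ≠ f x0
    have hlb : ∀ j, j ≠ f x0 → Real.exp (-ε) * ρ ≤ W x0 j := by
      intro j hj
      classical
      obtain ⟨xj, hxj⟩ := hf j
      have h1 : ρ ≤ W xj j := by rw [← hxj]; exact hrec xj
      have h2 : W xj j ≤ Real.exp ε * W x0 j := hldp x0 xj j
      have h3 : ρ ≤ Real.exp ε * W x0 j := le_trans h1 h2
      have := Real.exp_pos ε
      rw [Real.exp_neg]
      rw [inv_mul_le_iff₀ (by positivity)]
      exact h3
    have hsum : 1 = W x0 (f x0) + ∑ j ∈ univ.erase (f x0), W x0 j := by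
      rw [← hW1 x0, ← Finset.add_sum_erase _ _ (mem_univ (f x0))]
    have hcard : (univ.erase (f x0)).card = Fintype.card Z - 1 := by
      rw [Finset.card_erase_of_mem (mem_univ _), Finset.card_univ]
    have hsumlb : (k - 1) * (Real.exp (-ε) * ρ) ≤ ∑ j ∈ univ.erase (f x0), W x0 j := by
      have := Finset.card_nsmul_le_sum (univ.erase (f x0)) (W x0) (Real.exp (-ε) * ρ)
        (fun j hj => hlb j (Finset.ne_of_mem_erase hj))
      rw [hcard] at this
      have hk' : ((Fintype.card Z - 1 : ℕ) : ℝ) = k - 1 := by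
        have : 1 ≤ Fintype.card Z := by omega
        push_cast [Nat.cast_sub this]; ring
      simpa [nsmul_eq_mul, hk'] using this
    have h1 : ρ + (k - 1) * (Real.exp (-ε) * ρ) ≤ 1 := by
      have := hrec x0
      linarith [hsum, hsumlb, this]
    rw [le_div_iff₀ hD0]
    nlinarith
  · rw [div_lt_one hD0]; exact hD
end
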